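/- arXiv:2006.01213 — 2 statements merged into one kernel-verified Lean document; each statement's English description precedes it below -/
import Mathlib

section
/- Let N ≥ 1 and let w : {0,…,N} → ℤ_{>0} be a weight function. Grade ℂ[x_0,…,x_N] by weighted degree with respect to w, so that its degree-d component is spanned by the monomials of weighted degree d. Let f_1,…,f_k (with 1 ≤ k ≤ N−1) be a regular sequence in ℂ[x_0,…,x_N] consisting of weighted homogeneous polynomials of positive weighted degrees. Then the zero locus of {f_1,…,f_k} in the projective spectrum Proj of this graded ring is a connected (and nonempty) subspace. -/
open MvPolynomial

/-!
Hartshorne's connectedness argument. Suppose `Z = V₊(F)` splits as `V₊(𝔞) ⊔ V₊(𝔟)` with both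
parts nonempty. The graded Nullstellensatz gives `𝔞 𝔟 ⊆ √F` and `A₊ ⊆ √(𝔞 + 𝔟)`. Cutting by a
regular element lowers the `A₊`-depth by at most one (Rees), so `A ⧸ F` has `A₊`-depth at least
`N + 1 - k ≥ 2`: there is an `A ⧸ F`-regular sequence `x, y` in `A₊`, where `x` may be chosen
outside one point of each part. Write `x ^ s = α + β` and `y ^ u = α' + β'` with `α, α' ∈ 𝔞 ^ t`,
`β, β' ∈ 𝔟 ^ t` and `(𝔞 𝔟) ^ t ⊆ F`. Then `α y ^ u ≡ α' x ^ s` modulo `F`, so regularity gives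
`α ≡ x ^ s r`, and `r` is idempotent modulo `F`. A graded ring whose degree-zero part is a field
has no idempotents but `0` and `1`, so `x ^ s` lies in `F + 𝔞` or in `F + 𝔟`, and `x` vanishes at
the chosen point of one of the parts, a contradiction.
-/

open RingTheory.Sequence Pointwise DirectSum HomogeneousIdeal

universe u

theorem List.mem_take_ofFn_iff {α : Type*} {n : ℕ} (v : Fin n → α) (i : ℕ) (a : α) :
    a ∈ (List.ofFn v).take i ↔ ∃ j : Fin n, (j : ℕ) < i ∧ v j = a := by
  simp only [List.mem_take_iff_getElem, List.getElem_ofFn, List.length_ofFn]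
  constructor
  · rintro ⟨j, hj, rfl⟩
    exact ⟨⟨j, by omega⟩, show j < i by omega, rfl⟩
  · rintro ⟨j, hj, rfl⟩
    exact ⟨j, by omega, rfl⟩

section Depth

variable {R : Type u} [CommRing R]

def Ideal.HasDepthAtLeast (I : Ideal R) (M : Type u) [AddCommGroup M] [Module R M] (n : ℕ) :
    Prop :=
  ∃ rs : List R, n ≤ rs.length ∧ (∀ r ∈ rs, r ∈ I) ∧ IsRegular M rs

theorem Ideal.smul_top_lt_top_quotient {I F : Ideal R} (hFI : F ≤ I) (hI : I ≠ ⊤) :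
    I • (⊤ : Submodule R (R ⧸ F)) < ⊤ := by
  refine lt_top_iff_ne_top.mpr fun htop => hI ?_
  have := congrArg (Submodule.comap F.mkQ) htop
  rwa [Submodule.comap_smul_top_of_surjective _ _ (Submodule.mkQ_surjective _),
    Submodule.ker_mkQ, Submodule.comap_top, smul_eq_mul, Ideal.mul_top, sup_eq_left.mpr hFI]
    at this

def Ideal.quotSMulTopEquivQuotientSup (F : Ideal R) (x : R) :
    QuotSMulTop x (R ⧸ F) ≃ₗ[R] R ⧸ (F ⊔ Ideal.span {x}) :=
  (Submodule.quotEquivOfEq _ _ (by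
    ext m
    simp only [Submodule.map_span, Set.image_singleton, Submodule.mem_span_singleton,
      Submodule.mem_smul_pointwise_iff_exists, Submodule.mem_top, true_and]
    have hcomm (c : R) : x • F.mkQ c = c • F.mkQ x := by
      rw [← map_smul, ← map_smul, smul_eq_mul, smul_eq_mul, mul_comm]
    constructor
    · rintro ⟨b, rfl⟩
      obtain ⟨c, rfl⟩ := Submodule.mkQ_surjective F b
      exact ⟨c, (hcomm c).symm⟩
    · rintro ⟨c, hc⟩
      exact ⟨F.mkQ c, (hcomm c).trans hc⟩)).trans
    (Submodule.quotientQuotientEquivQuotientSup F (Ideal.span {x}))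

theorem RingTheory.Sequence.isWeaklyRegular_ofFn {n : ℕ} (v : Fin n → R)
    (h : ∀ j : Fin n, ∀ g : R, g * v j ∈ Ideal.span (v '' {i | i < j}) →
      g ∈ Ideal.span (v '' {i | i < j})) :
    IsWeaklyRegular R (List.ofFn v) := by
  rw [isWeaklyRegular_iff_Fin]
  intro i
  set j : Fin n := Fin.cast List.length_ofFn i
  have hspan : (Ideal.ofList ((List.ofFn v).take i) • ⊤ : Submodule R R) =
      Ideal.span (v '' {k | k < j}) := by
    rw [smul_eq_mul, Ideal.mul_top, Ideal.ofList]
    congr 1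
    ext a
    simp [List.mem_take_ofFn_iff, Fin.lt_def, j]
  have hget : (List.ofFn v)[i] = v j := List.getElem_ofFn _
  rw [hspan, hget, isSMulRegular_quotient_iff_mem_of_smul_mem]
  intro g hg
  exact h j g (by rwa [mul_comm])

variable {M : Type u} [AddCommGroup M] [Module R M]

theorem Ideal.smul_top_lt_top_quotSMulTop {I : Ideal R} {x : R} (hx : x ∈ I)
    (h : I • (⊤ : Submodule R M) < ⊤) : I • (⊤ : Submodule R (QuotSMulTop x M)) < ⊤ := by
  refine lt_top_iff_ne_top.mpr fun htop => h.ne ?_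
  have := congrArg (Submodule.comap (x • (⊤ : Submodule R M)).mkQ) htop
  rwa [Submodule.comap_smul_top_of_surjective _ _ (Submodule.mkQ_surjective _),
    Submodule.ker_mkQ, Submodule.comap_top, ← Submodule.ideal_span_singleton_smul,
    sup_eq_left.mpr (Submodule.smul_mono_left ((I.span_singleton_le_iff_mem).mpr hx))] at this

namespace Ideal.HasDepthAtLeast

variable {I : Ideal R} {n : ℕ}

theorem mono {m : ℕ} (h : I.HasDepthAtLeast M n) (hmn : m ≤ n) : I.HasDepthAtLeast M m :=
  let ⟨rs, hlen, hI, hreg⟩ := h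
  ⟨rs, hmn.trans hlen, hI, hreg⟩

theorem of_linearEquiv {M' : Type u} [AddCommGroup M'] [Module R M'] (e : M ≃ₗ[R] M')
    (h : I.HasDepthAtLeast M n) : I.HasDepthAtLeast M' n :=
  let ⟨rs, hlen, hI, hreg⟩ := h
  ⟨rs, hlen, hI, (e.isRegular_congr rs).mp hreg⟩

theorem nontrivial (h : I.HasDepthAtLeast M n) : Nontrivial M :=
  let ⟨_, _, _, hreg⟩ := h
  hreg.nontrivial

theorem exists_isSMulRegular (h : I.HasDepthAtLeast M (n + 1)) :
    ∃ x ∈ I, IsSMulRegular M x := by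
  obtain ⟨_ | ⟨x, rs⟩, hlen, hI, hreg⟩ := h
  · simp at hlen
  · exact ⟨x, hI x List.mem_cons_self, ((isRegular_cons_iff M x rs).mp hreg).1⟩

theorem exists_isSMulRegular_forall_notMem [IsNoetherianRing R] [Module.Finite R M]
    (h : I.HasDepthAtLeast M (n + 1)) {T : Set (Ideal R)} (hT : T.Finite)
    (hT_prime : ∀ P ∈ T, P.IsPrime) (hIT : ∀ P ∈ T, ¬ I ≤ P) :
    ∃ x ∈ I, IsSMulRegular M x ∧ ∀ P ∈ T, x ∉ P := by
  have hass := biUnion_associatedPrimes_eq_compl_regular R M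
  obtain ⟨a, haI, ha⟩ := h.exists_isSMulRegular
  have hIS : ¬ (I : Set R) ⊆ ⋃ P ∈ associatedPrimes R M ∪ T, (P : Set R) := by
    rw [Ideal.subset_union_prime_finite ((associatedPrimes.finite R M).union hT) 0 0
      fun P hP _ _ => hP.elim (fun hP => (AssociatedPrimes.mem_iff.mp hP).isPrime) (hT_prime P)]
    rintro ⟨P, hP | hP, hIP⟩
    · exact (hass ▸ Set.mem_biUnion hP (hIP haI) : a ∈ {r : R | IsSMulRegular M r}ᶜ) ha
    · exact hIT P hP hIP
  obtain ⟨x, hxI, hx⟩ := Set.not_subset.mp hIS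
  simp only [Set.mem_iUnion, Set.mem_union, not_exists] at hx
  refine ⟨x, hxI, ?_, fun P hP hxP => hx P (Or.inr hP) hxP⟩
  by_contra hreg
  obtain ⟨P, hP, hxP⟩ := Set.mem_iUnion₂.mp (hass.symm ▸ hreg :
    x ∈ ⋃ P ∈ associatedPrimes R M, (P : Set R))
  exact hx P (Or.inl hP) hxP

-- By Rees' theorem, depth `≥ n` means `Ext (R ⧸ I) M i = 0` for `i < n`; the long exact sequence
-- of `0 → M → M → QuotSMulTop x M → 0` shifts this vanishing range down by one.
open CategoryTheory Abelian in
theorem quotSMulTop [IsNoetherianRing R] [Module.Finite R M]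
    (smul_lt : I • (⊤ : Submodule R M) < ⊤) {x : R} (hxI : x ∈ I) (hx : IsSMulRegular M x)
    (h : I.HasDepthAtLeast M (n + 1)) : I.HasDepthAtLeast (QuotSMulTop x M) n := by
  obtain ⟨rs, hlen, hI, hreg⟩ := h
  obtain ⟨m, hm⟩ : ∃ m, rs.length = m + 1 := ⟨rs.length - 1, by omega⟩
  have tfae := ModuleCat.exists_isRegular_tfae I (m + 1) (ModuleCat.of R M) smul_lt
  have h_ext := (tfae.out 3 1).mp (by exact ⟨rs, hm, hI, hreg⟩)
  have h_ext' : ∀ i < m, Subsingleton (Ext (ModuleCat.of R (Shrink.{u} (R ⧸ I)))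
      (ModuleCat.of R (QuotSMulTop x M)) i) := by
    intro i hi
    have hexact := Ext.covariant_sequence_exact₃' (ModuleCat.of R (Shrink.{u} (R ⧸ I)))
      (IsSMulRegular.smulShortComplex_shortExact (M := ModuleCat.of R M) hx) i (i + 1) rfl
    have h0 := AddCommGrpCat.isZero_of_iff_subsingleton.mpr (h_ext i (by omega))
    have h1 := AddCommGrpCat.isZero_of_iff_subsingleton.mpr (h_ext (i + 1) (by omega))
    exact AddCommGrpCat.subsingleton_of_isZero <|
      hexact.isZero_of_both_zeros (h0.eq_zero_of_src _) (h1.eq_zero_of_tgt _)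
  have tfae' := ModuleCat.exists_isRegular_tfae I m
    (ModuleCat.of R (QuotSMulTop x M)) (smul_top_lt_top_quotSMulTop hxI smul_lt)
  obtain ⟨rs', hlen', hI', hreg'⟩ := (tfae'.out 1 3).mp h_ext'
  exact ⟨rs', by omega, hI', hreg'⟩

theorem quotient_ofList [IsNoetherianRing R] [Module.Finite R M] (rs : List R)
    (smul_lt : I • (⊤ : Submodule R M) < ⊤) (hreg : IsWeaklyRegular M rs)
    (hI : ∀ r ∈ rs, r ∈ I) (h : I.HasDepthAtLeast M (n + rs.length)) :
    I.HasDepthAtLeast (M ⧸ (Ideal.ofList rs • ⊤ : Submodule R M)) n := by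
  induction rs generalizing M with
  | nil =>
    exact h.of_linearEquiv
      (Submodule.quotEquivOfEqBot _ (by rw [Ideal.ofList_nil, Submodule.bot_smul])).symm
  | cons r rs ih =>
    rw [isWeaklyRegular_cons_iff] at hreg
    have hrI : r ∈ I := hI r List.mem_cons_self
    have h' := h.quotSMulTop smul_lt hrI hreg.1 (n := n + rs.length)
    exact (ih (smul_top_lt_top_quotSMulTop hrI smul_lt) hreg.2
      (fun s hs => hI s (List.mem_cons_of_mem r hs)) h').of_linearEquiv
      (Submodule.quotOfListConsSMulTopEquivQuotSMulTopInner M r rs).symm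

theorem quotient_span_range [IsNoetherianRing R] (hI : I ≠ ⊤) {k : ℕ} {f : Fin k → R}
    (hreg : ∀ j : Fin k, ∀ g : R, g * f j ∈ Ideal.span (f '' {i | i < j}) →
      g ∈ Ideal.span (f '' {i | i < j}))
    (hfI : ∀ j, f j ∈ I) (h : I.HasDepthAtLeast R (n + k)) :
    I.HasDepthAtLeast (R ⧸ Ideal.span (Set.range f)) n := by
  have hspan : (Ideal.ofList (List.ofFn f) • ⊤ : Submodule R R) = Ideal.span (Set.range f) := by
    rw [smul_eq_mul, Ideal.mul_top, Ideal.ofList]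
    congr 1
    ext
    simp [List.mem_ofFn]
  have smul_lt : I • (⊤ : Submodule R R) < ⊤ := by
    rwa [smul_eq_mul, Ideal.mul_top, lt_top_iff_ne_top]
  refine (quotient_ofList (List.ofFn f) smul_lt (isWeaklyRegular_ofFn f hreg) ?_
    (by rwa [List.length_ofFn])).of_linearEquiv (Submodule.quotEquivOfEq _ _ hspan)
  simpa [List.mem_ofFn] using hfI

theorem exists_isSMulRegular_pair [IsNoetherianRing R] {F : Ideal R} (hFI : F ≤ I)
    (hI : I ≠ ⊤) (h : I.HasDepthAtLeast (R ⧸ F) 2) {T : Set (Ideal R)} (hT : T.Finite)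
    (hT_prime : ∀ P ∈ T, P.IsPrime) (hIT : ∀ P ∈ T, ¬ I ≤ P) :
    ∃ x ∈ I, (∀ P ∈ T, x ∉ P) ∧ IsSMulRegular (R ⧸ F) x ∧
      ∃ y ∈ I, IsSMulRegular (R ⧸ (F ⊔ Ideal.span {x})) y := by
  obtain ⟨x, hxI, hx, hxT⟩ := h.exists_isSMulRegular_forall_notMem hT hT_prime hIT
  obtain ⟨y, hyI, hy⟩ := (quotSMulTop (M := R ⧸ F) (n := 1)
    (Ideal.smul_top_lt_top_quotient hFI hI) hxI hx h).exists_isSMulRegular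
  exact ⟨x, hxI, hxT, hx, y, hyI, ((F.quotSMulTopEquivQuotientSup x).isSMulRegular_congr y).mp hy⟩

end Ideal.HasDepthAtLeast

end Depth

section Idempotent

variable {A : Type*} [CommRing A]

theorem exists_sub_pow_mul_mem_of_mul_pow_sub_mem {F : Ideal A} {x y : A}
    (hx : IsSMulRegular (A ⧸ F) x) (hy : IsSMulRegular (A ⧸ (F ⊔ Ideal.span {x})) y)
    (u s : ℕ) {α α' : A} (h : α * y ^ u - α' * x ^ s ∈ F) : ∃ r, α - x ^ s * r ∈ F := by
  induction s generalizing α with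
  | zero => exact ⟨α, by simp⟩
  | succ s ih =>
    have hα : α ∈ F ⊔ Ideal.span {x} := by
      refine mem_of_isSMulRegular_quotient_of_smul_mem (hy.pow u) ?_
      have : y ^ u • α = (α * y ^ u - α' * x ^ (s + 1)) + α' * x ^ s * x := by
        rw [smul_eq_mul]; ring
      rw [this]
      exact add_mem (Ideal.mem_sup_left h)
        (Ideal.mem_sup_right (Ideal.mul_mem_left _ _ (Ideal.mem_span_singleton_self x)))
    obtain ⟨φ, hφ, z, hz, rfl⟩ := Submodule.mem_sup.mp hα
    obtain ⟨a, rfl⟩ := Ideal.mem_span_singleton'.mp hz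
    have ha : a * y ^ u - α' * x ^ s ∈ F := by
      refine mem_of_isSMulRegular_quotient_of_smul_mem hx ?_
      have : x • (a * y ^ u - α' * x ^ s) =
          ((φ + a * x) * y ^ u - α' * x ^ (s + 1)) - φ * y ^ u := by
        rw [smul_eq_mul]; ring
      rw [this]
      exact F.sub_mem h (F.mul_mem_right _ hφ)
    obtain ⟨r, hr⟩ := ih ha
    refine ⟨r, ?_⟩
    have : φ + a * x - x ^ (s + 1) * r = φ + (a - x ^ s * r) * x := by ring
    rw [this]
    exact F.add_mem hφ (F.mul_mem_right _ hr)

theorem mem_radical_sup_or_mem_radical_sup {F 𝔞 𝔟 : Ideal A} {x y : A}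
    (hF : ∀ e : A ⧸ F, IsIdempotentElem e → e = 0 ∨ e = 1)
    (hx : IsSMulRegular (A ⧸ F) x) (hy : IsSMulRegular (A ⧸ (F ⊔ Ideal.span {x})) y)
    (hab : 𝔞 * 𝔟 ≤ F) (hxab : x ∈ (𝔞 ⊔ 𝔟).radical) (hyab : y ∈ (𝔞 ⊔ 𝔟).radical) :
    x ∈ (F ⊔ 𝔞).radical ∨ x ∈ (F ⊔ 𝔟).radical := by
  have hmul {a b : A} (ha : a ∈ 𝔞) (hb : b ∈ 𝔟) : a * b ∈ F := hab (Ideal.mul_mem_mul ha hb)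
  obtain ⟨s, hs⟩ := hxab
  obtain ⟨u, hu⟩ := hyab
  obtain ⟨α, hα, β, hβ, hxs⟩ := Submodule.mem_sup.mp hs
  obtain ⟨α', hα', β', hβ', hyu⟩ := Submodule.mem_sup.mp hu
  obtain ⟨r, hr⟩ : ∃ r, α - x ^ s * r ∈ F := by
    refine exists_sub_pow_mul_mem_of_mul_pow_sub_mem hx hy u s (α' := α') ?_
    have : α * y ^ u - α' * x ^ s = α * β' - α' * β := by rw [← hxs, ← hyu]; ring
    rw [this]
    exact F.sub_mem (hmul hα hβ') (hmul hα' hβ)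
  have hidem : IsIdempotentElem (Ideal.Quotient.mk F r) := by
    refine Ideal.Quotient.eq.mpr (mem_of_isSMulRegular_quotient_of_smul_mem (hx.pow (s + s)) ?_)
    -- `x ^ s * r` is `α` modulo `F`, and `α` is idempotent up to `α * β ∈ F`
    have : x ^ (s + s) • (r * r - r) =
        (α - x ^ s * r) * (α - x ^ s * r - 2 * α) + (α - x ^ s * r) * x ^ s - α * β := by
      rw [smul_eq_mul]; linear_combination α * hxs
    rw [this]
    exact F.sub_mem (F.add_mem (F.mul_mem_right _ hr) (F.mul_mem_right _ hr)) (hmul hα hβ)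
  rcases hF _ hidem with h0 | h1
  · right
    have hrF : r ∈ F := Ideal.Quotient.eq_zero_iff_mem.mp h0
    refine ⟨s, ?_⟩
    have : x ^ s = (α - x ^ s * r) + x ^ s * r + β := by linear_combination -hxs
    rw [this]
    exact Ideal.add_mem _ (Ideal.mem_sup_left (F.add_mem hr (F.mul_mem_left _ hrF)))
      (Ideal.mem_sup_right hβ)
  · left
    have hrF : 1 - r ∈ F := Ideal.Quotient.eq.mp h1.symm
    refine ⟨s, ?_⟩
    have : x ^ s = α + (x ^ s * (1 - r) - (α - x ^ s * r)) := by ring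
    rw [this]
    exact Ideal.add_mem _ (Ideal.mem_sup_right hα)
      (Ideal.mem_sup_left (F.sub_mem (F.mul_mem_left _ hrF) hr))

theorem mem_radical_sup_or_mem_radical_sup_of_le_radical [IsNoetherianRing A]
    {F 𝔞 𝔟 : Ideal A} {x y : A}
    (hF : ∀ e : A ⧸ F, IsIdempotentElem e → e = 0 ∨ e = 1)
    (hx : IsSMulRegular (A ⧸ F) x) (hy : IsSMulRegular (A ⧸ (F ⊔ Ideal.span {x})) y)
    (hab : 𝔞 * 𝔟 ≤ F.radical) (hxab : x ∈ (𝔞 ⊔ 𝔟).radical) (hyab : y ∈ (𝔞 ⊔ 𝔟).radical) :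
    x ∈ (F ⊔ 𝔞).radical ∨ x ∈ (F ⊔ 𝔟).radical := by
  obtain ⟨t, ht⟩ := Ideal.exists_pow_le_of_le_radical_of_fg hab (IsNoetherian.noetherian _)
  have ht' : 𝔞 ^ (t + 1) * 𝔟 ^ (t + 1) ≤ F :=
    (mul_pow 𝔞 𝔟 (t + 1)).symm.trans_le ((Ideal.pow_le_pow_right t.le_succ).trans ht)
  have hrad (J K : Ideal A) : (J ⊔ K ^ (t + 1)).radical = (J ⊔ K).radical := by
    rw [Ideal.radical_sup, Ideal.radical_pow _ t.succ_ne_zero, ← Ideal.radical_sup]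
  have hrad₂ : (𝔞 ^ (t + 1) ⊔ 𝔟 ^ (t + 1)).radical = (𝔞 ⊔ 𝔟).radical := by
    rw [hrad, sup_comm, hrad, sup_comm]
  rw [← hrad F 𝔞, ← hrad F 𝔟]
  exact mem_radical_sup_or_mem_radical_sup hF hx hy ht' (hrad₂ ▸ hxab) (hrad₂ ▸ hyab)

end Idempotent

section Graded

variable {A σ : Type*} [CommRing A] [SetLike σ A] [AddSubmonoidClass σ A] {𝒜 : ℕ → σ}
  [GradedRing 𝒜]

namespace Ideal.IsHomogeneous

variable {J : Ideal A}

theorem le_irrelevant (hA0 : ∀ a ∈ 𝒜 0, a ≠ 0 → IsUnit a) (hJ : J.IsHomogeneous 𝒜)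
    (hJ_ne_top : J ≠ ⊤) : J ≤ (irrelevant 𝒜).toIdeal := by
  intro a ha
  change GradedRing.proj 𝒜 0 a = 0
  by_contra h
  exact hJ_ne_top (J.eq_top_of_isUnit_mem (hJ 0 ha) (hA0 _ (SetLike.coe_mem _) h))

theorem mem_of_projZeroRingHom_mem_of_mul_self_sub_mem (hJ : J.IsHomogeneous 𝒜) {r : A}
    (h0 : GradedRing.projZeroRingHom 𝒜 r ∈ J) (hr : r * r - r ∈ J) : r ∈ J := by
  classical
  suffices ∀ n, GradedRing.proj 𝒜 n r ∈ J by
    rw [← sum_support_decompose 𝒜 r]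
    exact J.sum_mem fun n _ => this n
  intro n
  induction n using Nat.strong_induction_on with
  | _ n ih =>
    rcases n.eq_zero_or_pos with rfl | hn
    · exact h0
    have hsq : GradedRing.proj 𝒜 n (r * r) ∈ J := by
      rw [GradedRing.proj_apply, decompose_mul, coe_mul_apply]
      refine J.sum_mem fun ij hij => ?_
      simp only [Finset.mem_filter] at hij
      rcases ij.1.eq_zero_or_pos with h | h
      · rw [h]; exact J.mul_mem_right _ h0
      · exact J.mul_mem_left _ (ih ij.2 (by omega))
    have := J.sub_mem hsq (hJ n hr)
    rwa [← GradedRing.proj_apply, map_sub, sub_sub_cancel] at this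

theorem eq_zero_or_eq_one_of_isIdempotentElem (hA0 : ∀ a ∈ 𝒜 0, a ≠ 0 → IsUnit a)
    (hJ : J.IsHomogeneous 𝒜) (hJ_ne_top : J ≠ ⊤) (e : A ⧸ J) (he : IsIdempotentElem e) :
    e = 0 ∨ e = 1 := by
  obtain ⟨r, rfl⟩ := Ideal.Quotient.mk_surjective e
  have hr : r * r - r ∈ J := Ideal.Quotient.eq.mp he
  have hr₀ : IsIdempotentElem (GradedRing.projZeroRingHom 𝒜 r) := by
    have h : GradedRing.projZeroRingHom 𝒜 (r * r - r) = 0 := by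
      by_contra h
      exact hJ_ne_top (J.eq_top_of_isUnit_mem (hJ 0 hr) (hA0 _ (SetLike.coe_mem _) h))
    rwa [map_sub, map_mul, sub_eq_zero] at h
  rcases eq_or_ne (GradedRing.projZeroRingHom 𝒜 r) 0 with h0 | h0
  · left
    refine Ideal.Quotient.eq_zero_iff_mem.mpr
      (hJ.mem_of_projZeroRingHom_mem_of_mul_self_sub_mem ?_ hr)
    rw [h0]
    exact J.zero_mem
  · right
    have h1 : GradedRing.projZeroRingHom 𝒜 r = 1 :=
      (hA0 _ (SetLike.coe_mem _) h0).mul_left_cancel (hr₀.trans (mul_one _).symm)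
    refine (Ideal.Quotient.eq.mpr ?_).symm
    refine hJ.mem_of_projZeroRingHom_mem_of_mul_self_sub_mem ?_ (by convert hr using 1; ring)
    rw [map_sub, map_one, h1, sub_self]
    exact J.zero_mem

end Ideal.IsHomogeneous

end Graded

namespace ProjectiveSpectrum

variable {A : Type u} {σ : Type*} [CommRing A] [SetLike σ A] [AddSubmonoidClass σ A]
  {𝒜 : ℕ → σ} [GradedRing 𝒜]

theorem irrelevant_toIdeal_ne_top [Nontrivial A] : (irrelevant 𝒜).toIdeal ≠ ⊤ := by
  rw [Ne, Ideal.eq_top_iff_one]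
  change GradedRing.projZeroRingHom 𝒜 1 ≠ 0
  rw [map_one]
  exact one_ne_zero

theorem le_radical_of_zeroLocus_subset {J K : Ideal A} (hJ : J.IsHomogeneous 𝒜)
    (hK : K ≤ (irrelevant 𝒜).toIdeal) (h : zeroLocus 𝒜 J ⊆ zeroLocus 𝒜 K) : K ≤ J.radical := by
  rw [hJ.radical_eq]
  refine le_sInf fun P ⟨hP, hJP, hP_prime⟩ => ?_
  by_cases hirr : (irrelevant 𝒜).toIdeal ≤ P
  · exact hK.trans hirr
  · exact h (show ⟨⟨P, hP⟩, hP_prime, hirr⟩ ∈ zeroLocus 𝒜 J from hJP)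

theorem zeroLocus_nonempty {F : Ideal A} (hF : F.IsHomogeneous 𝒜)
    (h : (irrelevant 𝒜).toIdeal.HasDepthAtLeast (A ⧸ F) 1) : (zeroLocus 𝒜 F).Nonempty := by
  obtain ⟨x, hxI, hx⟩ := h.exists_isSMulRegular
  rw [Set.nonempty_iff_ne_empty]
  intro hempty
  obtain ⟨n, hn⟩ := le_radical_of_zeroLocus_subset hF le_rfl (hempty ▸ Set.empty_subset _) hxI
  have hF_ne_top := Ideal.Quotient.nontrivial_iff.mp h.nontrivial
  exact hF_ne_top (F.eq_top_iff_one.mpr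
    (mem_of_isSMulRegular_quotient_of_smul_mem (hx.pow n) (by rwa [smul_eq_mul, mul_one])))

theorem zeroLocus_inter_nonempty [IsNoetherianRing A] (hA0 : ∀ a ∈ 𝒜 0, a ≠ 0 → IsUnit a)
    {F 𝔞 𝔟 : Ideal A} (hF : F.IsHomogeneous 𝒜) (h𝔞 : 𝔞.IsHomogeneous 𝒜)
    (h𝔟 : 𝔟.IsHomogeneous 𝒜) (hdepth : (irrelevant 𝒜).toIdeal.HasDepthAtLeast (A ⧸ F) 2)
    (hcover : zeroLocus 𝒜 F = zeroLocus 𝒜 𝔞 ∪ zeroLocus 𝒜 𝔟)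
    (hne𝔞 : (zeroLocus 𝒜 𝔞).Nonempty) (hne𝔟 : (zeroLocus 𝒜 𝔟).Nonempty) :
    (zeroLocus 𝒜 𝔞 ∩ zeroLocus 𝒜 𝔟).Nonempty := by
  obtain ⟨p, hp⟩ := hne𝔞
  obtain ⟨q, hq⟩ := hne𝔟
  rw [Set.nonempty_iff_ne_empty, ← zeroLocus_sup_ideal]
  intro hdisj
  have := hdepth.nontrivial
  have : Nontrivial A := (Ideal.Quotient.mk_surjective (I := F)).nontrivial
  have hF_ne_top : F ≠ ⊤ := Ideal.Quotient.nontrivial_iff.mp ‹_›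
  have hpF : F ≤ p.asHomogeneousIdeal.toIdeal := (hcover ▸ Or.inl hp : p ∈ zeroLocus 𝒜 F)
  have hqF : F ≤ q.asHomogeneousIdeal.toIdeal := (hcover ▸ Or.inr hq : q ∈ zeroLocus 𝒜 F)
  have h𝔞_irr : 𝔞 ≤ (irrelevant 𝒜).toIdeal :=
    h𝔞.le_irrelevant hA0 (ne_top_of_le_ne_top p.isPrime.ne_top hp)
  have hab : 𝔞 * 𝔟 ≤ F.radical := le_radical_of_zeroLocus_subset hF
    (Ideal.mul_le_left.trans h𝔞_irr) (by rw [zeroLocus_mul_ideal, hcover])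
  have hirr : (irrelevant 𝒜).toIdeal ≤ (𝔞 ⊔ 𝔟).radical := le_radical_of_zeroLocus_subset
    (h𝔞.sup h𝔟) le_rfl (hdisj ▸ Set.empty_subset _)
  obtain ⟨x, hxI, hxT, hx, y, hyI, hy⟩ := hdepth.exists_isSMulRegular_pair
    (hF.le_irrelevant hA0 hF_ne_top) irrelevant_toIdeal_ne_top
    (T := {p.asHomogeneousIdeal.toIdeal, q.asHomogeneousIdeal.toIdeal})
    (Set.toFinite _) (by rintro P (rfl | rfl) <;> infer_instance)
    (by rintro P (rfl | rfl); exacts [p.not_irrelevant_le, q.not_irrelevant_le])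
  rcases mem_radical_sup_or_mem_radical_sup_of_le_radical
      (hF.eq_zero_or_eq_one_of_isIdempotentElem hA0 hF_ne_top) hx hy hab (hirr hxI) (hirr hyI)
    with h | h
  · refine hxT _ (Set.mem_insert _ _) ?_
    rw [← p.isPrime.radical]
    exact Ideal.radical_mono (sup_le hpF hp) h
  · refine hxT _ (Set.mem_insert_of_mem _ rfl) ?_
    rw [← q.isPrime.radical]
    exact Ideal.radical_mono (sup_le hqF hq) h

theorem isConnected_zeroLocus [IsNoetherianRing A] (hA0 : ∀ a ∈ 𝒜 0, a ≠ 0 → IsUnit a)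
    {F : Ideal A} (hF : F.IsHomogeneous 𝒜)
    (hdepth : (irrelevant 𝒜).toIdeal.HasDepthAtLeast (A ⧸ F) 2) :
    IsConnected (zeroLocus 𝒜 F) := by
  refine ⟨zeroLocus_nonempty hF (hdepth.mono one_le_two), ?_⟩
  rw [isPreconnected_closed_iff]
  intro t₁ t₂ ht₁ ht₂ hcover hne₁ hne₂
  set Z := zeroLocus 𝒜 (F : Set A)
  have hclosure (t : Set (ProjectiveSpectrum 𝒜)) (ht : IsClosed t) :
      zeroLocus 𝒜 (vanishingIdeal (Z ∩ t)).toIdeal = Z ∩ t := by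
    change zeroLocus 𝒜 (vanishingIdeal (Z ∩ t) : Set A) = _
    rw [zeroLocus_vanishingIdeal_eq_closure, ((isClosed_zeroLocus 𝒜 _).inter ht).closure_eq]
  rw [Set.inter_inter_distrib_left, ← hclosure t₁ ht₁, ← hclosure t₂ ht₂]
  refine zeroLocus_inter_nonempty hA0 hF (vanishingIdeal _).isHomogeneous
    (vanishingIdeal _).isHomogeneous hdepth ?_ (by rwa [hclosure t₁ ht₁])
    (by rwa [hclosure t₂ ht₂])
  rw [hclosure t₁ ht₁, hclosure t₂ ht₂, ← Set.inter_union_distrib_left,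
    Set.inter_eq_left.mpr hcover]

end ProjectiveSpectrum

namespace MvPolynomial

theorem isUnit_of_mem_weightedHomogeneousSubmodule_zero {σ K : Type*} [Field K] {w : σ → ℕ}
    (hw : ∀ i, w i ≠ 0) {a : MvPolynomial σ K} (ha : a ∈ weightedHomogeneousSubmodule K w 0)
    (ha0 : a ≠ 0) : IsUnit a := by
  rw [← IsWeightedHomogeneous.weightedHomogeneousComponent_same ha,
    weightedHomogeneousComponent_zero _ hw] at ha0 ⊢
  exact (isUnit_iff_ne_zero.mpr fun h => ha0 (by rw [h, C_0])).map C

theorem mem_span_X_image_of_mul_X_mem {σ R : Type*} [CommRing R] {s : Set σ} {j : σ}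
    (hj : j ∉ s) {g : MvPolynomial σ R} (h : g * X j ∈ Ideal.span (X '' s)) :
    g ∈ Ideal.span (X '' s) := by
  classical
  rw [mem_ideal_span_X_image] at h ⊢
  intro m hm
  obtain ⟨i, his, hi⟩ := h (m + Finsupp.single j 1)
    (by rwa [mem_support_iff, coeff_mul_X, ← mem_support_iff])
  have hij : i ≠ j := fun h => hj (h ▸ his)
  exact ⟨i, his, by simpa [Finsupp.single_apply, Ne.symm hij] using hi⟩

theorem hasDepthAtLeast_of_X_mem {R : Type u} [CommRing R] {n : ℕ}
    {I : Ideal (MvPolynomial (Fin n) R)} (hI : I ≠ ⊤) (hX : ∀ i, X i ∈ I) :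
    I.HasDepthAtLeast (MvPolynomial (Fin n) R) n := by
  have hXI : ∀ r ∈ List.ofFn (X : Fin n → MvPolynomial (Fin n) R), r ∈ I := by
    simpa [List.mem_ofFn] using hX
  refine ⟨List.ofFn X, (List.length_ofFn).ge, hXI, ?_, ?_⟩
  · exact isWeaklyRegular_ofFn X fun j g => mem_span_X_image_of_mul_X_mem (by simp)
  · rw [smul_eq_mul, Ideal.mul_top]
    exact fun h => hI (top_le_iff.mp (h.le.trans (Ideal.span_le.mpr hXI)))

end MvPolynomial

theorem weighted_complete_intersection_connected_general
    (N : ℕ) (hN : 1 ≤ N) (w : Fin (N + 1) → ℕ) (hw : ∀ i, 0 < w i)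
    (k : ℕ) (hkN : k ≤ N - 1)
    (f : Fin k → MvPolynomial (Fin (N + 1)) ℂ) (d : Fin k → ℕ)
    (hf : ∀ j, IsWeightedHomogeneous w (f j) (d j))
    -- `f` is a regular sequence: each `f j` is a nonzerodivisor modulo the ideal generated by
    -- the previous ones, and the `f j` generate a proper ideal.
    (hreg : ∀ j : Fin k, ∀ g : MvPolynomial (Fin (N + 1)) ℂ,
      g * f j ∈ Ideal.span (f '' {i | i < j}) → g ∈ Ideal.span (f '' {i | i < j}))
    (hproper : Ideal.span (Set.range f) ≠ ⊤) :
    letI := weightedGradedAlgebra ℂ w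
    IsConnected (ProjectiveSpectrum.zeroLocus
      (weightedHomogeneousSubmodule ℂ w) (Set.range f)) := by
  let := weightedGradedAlgebra ℂ w
  have hA0 (a) (ha : a ∈ weightedHomogeneousSubmodule ℂ w 0) (ha0 : a ≠ 0) : IsUnit a :=
    isUnit_of_mem_weightedHomogeneousSubmodule_zero (fun i => (hw i).ne') ha ha0
  have hF : (Ideal.span (Set.range f)).IsHomogeneous (weightedHomogeneousSubmodule ℂ w) :=
    Ideal.homogeneous_span _ _ (by rintro _ ⟨j, rfl⟩; exact ⟨d j, hf j⟩)
  have hX := hasDepthAtLeast_of_X_mem ProjectiveSpectrum.irrelevant_toIdeal_ne_top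
    fun i => mem_irrelevant_of_mem (weightedHomogeneousSubmodule ℂ w) (hw i)
      (isWeightedHomogeneous_X ℂ w i)
  have hdepth := (hX.mono (show 2 + k ≤ N + 1 by omega)).quotient_span_range
    ProjectiveSpectrum.irrelevant_toIdeal_ne_top hreg
    fun j => hF.le_irrelevant hA0 hproper (Ideal.subset_span ⟨j, rfl⟩)
  rw [← ProjectiveSpectrum.zeroLocus_span]
  exact ProjectiveSpectrum.isConnected_zeroLocus hA0 hF hdepth

/-- The zero locus, in the projective spectrum of `ℂ[x_0, …, x_N]` graded by
weighted degree (i.e. in the weighted projective space `ℙ(w(0), …, w(N))`), of a regular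
sequence `f_1, …, f_k` (with `1 ≤ k ≤ N - 1`) of weighted homogeneous polynomials of positive
weighted degrees is connected and nonempty. -/
theorem weighted_complete_intersection_connected
    (N : ℕ) (hN : 1 ≤ N) (w : Fin (N + 1) → ℕ) (hw : ∀ i, 0 < w i)
    (k : ℕ) (hk : 1 ≤ k) (hkN : k ≤ N - 1)
    (f : Fin k → MvPolynomial (Fin (N + 1)) ℂ) (d : Fin k → ℕ)
    (hd : ∀ j, 0 < d j)
    (hf : ∀ j, IsWeightedHomogeneous w (f j) (d j))
    -- `f` is a regular sequence: each `f j` is a nonzerodivisor modulo the ideal generated by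
    -- the previous ones, and the `f j` generate a proper ideal.
    (hreg : ∀ j : Fin k, ∀ g : MvPolynomial (Fin (N + 1)) ℂ,
      g * f j ∈ Ideal.span (f '' {i | i < j}) → g ∈ Ideal.span (f '' {i | i < j}))
    (hproper : Ideal.span (Set.range f) ≠ ⊤) :
    letI := weightedGradedAlgebra ℂ w
    IsConnected (ProjectiveSpectrum.zeroLocus
      (weightedHomogeneousSubmodule ℂ w) (Set.range f)) :=
  weighted_complete_intersection_connected_general N hN w hw k hkN f d hf hreg hproper
end

section
/- Let N ≥ 1, let w : {0,…,N} → ℤ_{>0} be a weight function, and let f ∈ ℂ[x_0,…,x_N] be weighted homogeneous of weighted degree d > 0 with respect to w, with d ≠ w(i) for every i ∈ {0,…,N}. Suppose f defines a quasi-smooth hypersurface: for every nonzero v ∈ ℂ^{N+1} with f(v) = 0, there exists an index i with (∂f/∂x_i)(v) ≠ 0. Then d > w(i) for every i ∈ {0,…,N}. -/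
/-!
If `d < w i`, no monomial of weight `d` can contain `x i`, so neither `f` nor any `∂f/∂x_k`
involves `x i`. Evaluated at the coordinate point `e_i`, such a polynomial reduces to its
constant term. The constant term of `f` vanishes because `d > 0`, and that of `∂f/∂x_k` is the
coefficient of `x k` in `f`, which vanishes because `d ≠ w k`. Hence `e_i` is a singular point
of the affine cone, contradicting quasi-smoothness.
-/

open MvPolynomial

namespace MvPolynomial

variable {σ R : Type*} [CommSemiring R]

theorem vars_pderiv_subset (p : MvPolynomial σ R) (k : σ) : (pderiv k p).vars ⊆ p.vars := by
  intro i hi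
  obtain ⟨m, hm, hmi⟩ := mem_vars_iff_mem_support i |>.mp hi
  have hcoeff : coeff (m + Finsupp.single k 1) p ≠ 0 :=
    left_ne_zero_of_mul (coeff_pderiv p m ▸ mem_support_iff.mp hm)
  refine (mem_vars_iff_mem_support i).mpr
    ⟨m + Finsupp.single k 1, mem_support_iff.mpr hcoeff, ?_⟩
  simp only [Finsupp.mem_support_iff, Finsupp.add_apply] at hmi ⊢
  omega

theorem eval_single_eq_constantCoeff_of_notMem_vars [DecidableEq σ] {p : MvPolynomial σ R}
    {i : σ} (h : i ∉ p.vars) (a : R) : eval (Pi.single i a) p = constantCoeff p := by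
  rw [← eval_zero]
  refine hom_congr_vars (by ext; simp) (fun j hj _ => ?_) rfl
  simp [Pi.single_eq_of_ne (ne_of_mem_of_not_mem hj h)]

namespace IsWeightedHomogeneous

variable {w : σ → ℕ} {p : MvPolynomial σ R} {n : ℕ}

theorem notMem_vars_of_lt (hp : IsWeightedHomogeneous w p n) {i : σ} (hi : n < w i) :
    i ∉ p.vars := by
  intro hmem
  obtain ⟨m, hm, hmi⟩ := mem_vars_iff_mem_support i |>.mp hmem
  have hle := Finsupp.le_weight_of_ne_zero' w (Finsupp.mem_support_iff.mp hmi)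
  rw [hp (mem_support_iff.mp hm)] at hle
  omega

theorem constantCoeff_eq_zero (hp : IsWeightedHomogeneous w p n) (hn : n ≠ 0) :
    constantCoeff p = 0 := by
  rw [constantCoeff_eq]
  exact hp.coeff_eq_zero 0 (by simpa using hn.symm)

theorem constantCoeff_pderiv_eq_zero (hp : IsWeightedHomogeneous w p n) {k : σ} (hk : n ≠ w k) :
    constantCoeff (pderiv k p) = 0 := by
  rw [constantCoeff_eq, coeff_pderiv, zero_add,
    hp.coeff_eq_zero _ (by simpa [Finsupp.weight_single] using hk.symm), zero_mul]

end IsWeightedHomogeneous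

end MvPolynomial

theorem degree_gt_weights_of_quasi_smooth_hypersurface_general
    (N : ℕ) (w : Fin (N + 1) → ℕ)
    (f : MvPolynomial (Fin (N + 1)) ℂ) (d : ℕ) (hd : 0 < d)
    (hf : IsWeightedHomogeneous w f d)
    (hlc : ∀ i, d ≠ w i)
    -- quasi-smoothness: at every nonzero point of the affine cone over `{f = 0}`
    -- some partial derivative of `f` does not vanish.
    (hqs : ∀ v : Fin (N + 1) → ℂ, v ≠ 0 → eval v f = 0 →
      ∃ i, eval v (pderiv i f) ≠ 0) :
    ∀ i, w i < d := by
  intro i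
  by_contra! hle
  have hi : i ∉ f.vars := hf.notMem_vars_of_lt (lt_of_le_of_ne hle (hlc i))
  obtain ⟨k, hk⟩ := hqs (Pi.single i 1) (by simp)
    (by rw [eval_single_eq_constantCoeff_of_notMem_vars hi, hf.constantCoeff_eq_zero hd.ne'])
  apply hk
  rw [eval_single_eq_constantCoeff_of_notMem_vars (fun h => hi (vars_pderiv_subset f k h)),
    hf.constantCoeff_pderiv_eq_zero (hlc k)]

/-- The degree of a quasi-smooth weighted hypersurface which is not an
intersection with a linear cone strictly exceeds every weight. -/
theorem degree_gt_weights_of_quasi_smooth_hypersurface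
    (N : ℕ) (hN : 1 ≤ N) (w : Fin (N + 1) → ℕ) (hw : ∀ i, 0 < w i)
    (f : MvPolynomial (Fin (N + 1)) ℂ) (d : ℕ) (hd : 0 < d)
    (hf : IsWeightedHomogeneous w f d)
    (hlc : ∀ i, d ≠ w i)
    -- quasi-smoothness: at every nonzero point of the affine cone over `{f = 0}`
    -- some partial derivative of `f` does not vanish.
    (hqs : ∀ v : Fin (N + 1) → ℂ, v ≠ 0 → eval v f = 0 →
      ∃ i, eval v (pderiv i f) ≠ 0) :
    ∀ i, w i < d :=
  degree_gt_weights_of_quasi_smooth_hypersurface_general N w f d hd hf hlc hqs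
end
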